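/- arXiv:cs/0504088 — 8 statements merged into one kernel-verified Lean document; each statement's English description precedes it below -/
import Mathlib

section
/- In the reversible pebble game on a linear list of nodes {0,1,...,N} with node 0 permanently pebbled, where a move consists of placing a free pebble on node i+1 or removing a pebble from node i+1 provided node i is pebbled, the maximum node that can be pebbled using n pebbles (beyond the fixed one at node 0) is exactly 2^n - 1. -/
/-- One legal move of the reversible pebble game with `n` movable pebbles
(plus the fixed pebble on node 0, so configurations have at most `n+1` nodes):
place a free pebble on node `i+1` or remove the pebble from node `i+1`,
provided node `i` carries a pebble. -/
def PebbleStep (n : ℕ) (c c' : Finset ℕ) : Prop :=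
  ∃ i, i ∈ c ∧
    ((i + 1 ∉ c ∧ c.card < n + 1 ∧ c' = insert (i + 1) c) ∨
     (i + 1 ∈ c ∧ c' = c.erase (i + 1)))

/-- A configuration is reachable if it arises from the initial configuration
`{0}` (only the fixed pebble placed, all `n` pebbles free) by legal moves. -/
def PebbleReachable (n : ℕ) (c : Finset ℕ) : Prop :=
  Relation.ReflTransGen (PebbleStep n) {0} c

/-- Inductive over-approximation of reachable configurations: starting from
`{0}`, one may add a pebble `p` above some pebble `b` provided the jump is at
most `2 ^ (n - c.card)`. -/
inductive Good (n : ℕ) : Finset ℕ → Prop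
  | base : Good n {0}
  | grow {c : Finset ℕ} {b p : ℕ} : Good n c → b ∈ c → b < p → p ∉ c →
      c.card ≤ n → p ≤ b + 2 ^ (n - c.card) → Good n (insert p c)

lemma good_card {n : ℕ} {c : Finset ℕ} (h : Good n c) :
    1 ≤ c.card ∧ c.card ≤ n + 1 := by
  induction h with
  | base => simp
  | grow _ hb hlt hp hcard hle ih =>
    rw [Finset.card_insert_of_notMem hp]
    omega

lemma good_bound {n : ℕ} {c : Finset ℕ} (h : Good n c) :
    ∀ v ∈ c, v + 2 ^ (n + 1 - c.card) ≤ 2 ^ n := by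
  induction h with
  | base =>
    intro v hv
    simp only [Finset.mem_singleton] at hv
    subst hv
    simp
  | @grow c b p hg hb hlt hp hcard hle ih =>
    intro v hv
    rw [Finset.card_insert_of_notMem hp]
    have hm : 1 ≤ c.card := (good_card hg).1
    have e1 : n + 1 - (c.card + 1) = n - c.card := by omega
    have e2 : n + 1 - c.card = (n - c.card) + 1 := by omega
    rw [e1]
    rcases Finset.mem_insert.1 hv with rfl | hv
    · have hb' := ih b hb
      rw [e2, pow_succ] at hb'
      omega
    · have hv' := ih v hv
      rw [e2, pow_succ] at hv'
      omega

lemma good_erase {n : ℕ} {c : Finset ℕ} (h : Good n c) :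
    ∀ t s : ℕ, t ∈ c → s ∈ c → s < t → t ≤ s + 2 ^ (n + 1 - c.card) →
      Good n (c.erase t) := by
  induction h with
  | base =>
    intro t s ht hs hst _
    simp only [Finset.mem_singleton] at ht hs
    omega
  | @grow c b p hg hb hlt hp hcard hle ih =>
    intro t s ht hs hst hgap
    have hm : 1 ≤ c.card := (good_card hg).1
    rw [Finset.card_insert_of_notMem hp] at hgap
    have e1 : n + 1 - (c.card + 1) = n - c.card := by omega
    rw [e1] at hgap
    by_cases htp : t = p
    · subst htp
      rw [Finset.erase_insert hp]
      exact hg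
    · -- t ∈ c
      have htc : t ∈ c := by
        rcases Finset.mem_insert.1 ht with h' | h'
        · exact absurd h' htp
        · exact h'
      have e2 : n + 1 - c.card = (n - c.card) + 1 := by omega
      -- find s' ∈ c with s' < t and t ≤ s' + 2^(n+1-c.card)
      have hs' : ∃ s' ∈ c, s' < t ∧ t ≤ s' + 2 ^ (n + 1 - c.card) := by
        rcases Finset.mem_insert.1 hs with rfl | hsc
        · -- s = p
          refine ⟨b, hb, by omega, ?_⟩
          rw [e2, pow_succ]
          omega
        · refine ⟨s, hsc, hst, ?_⟩
          rw [e2, pow_succ]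
          omega
      obtain ⟨s', hs'c, hs't, hs'gap⟩ := hs'
      have hgood_erase : Good n (c.erase t) := ih t s' htc hs'c hs't hs'gap
      -- reinsert p
      have hcarde : (c.erase t).card = c.card - 1 := Finset.card_erase_of_mem htc
      have e3 : n - (c.card - 1) = (n - c.card) + 1 := by omega
      have hpe : p ∉ c.erase t := fun h' => hp (Finset.mem_of_mem_erase h')
      have key : ∃ b' ∈ c.erase t, b' < p ∧ p ≤ b' + 2 ^ (n - (c.erase t).card) := by
        rw [hcarde, e3, pow_succ]
        by_cases hbt : b = t
        · -- use the original s (note s < t = b < p, s ∈ c, s ≠ t)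
          subst hbt
          have hsc : s ∈ c := by
            rcases Finset.mem_insert.1 hs with rfl | h'
            · omega
            · exact h'
          exact ⟨s, Finset.mem_erase.2 ⟨by omega, hsc⟩, by omega, by omega⟩
        · refine ⟨b, Finset.mem_erase.2 ⟨hbt, hb⟩, hlt, by omega⟩
      obtain ⟨b', hb'mem, hb'lt, hb'gap⟩ := key
      have : Good n (insert p (c.erase t)) :=
        Good.grow hgood_erase hb'mem hb'lt hpe (by omega) hb'gap
      rwa [Finset.erase_insert_of_ne (by omega : p ≠ t)]

lemma good_step {n : ℕ} {c c' : Finset ℕ} (h : Good n c) (hs : PebbleStep n c c') :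
    Good n c' := by
  obtain ⟨i, hi, hcase⟩ := hs
  rcases hcase with ⟨hnm, hcard, rfl⟩ | ⟨hm, rfl⟩
  · exact Good.grow h hi (by omega) hnm (by omega)
      (by have := Nat.one_le_two_pow (n := n - c.card); omega)
  · exact good_erase h (i + 1) i hm hi (by omega)
      (by have := Nat.one_le_two_pow (n := n + 1 - c.card); omega)

lemma reachable_good {n : ℕ} {c : Finset ℕ} (h : PebbleReachable n c) : Good n c := by
  induction h with
  | refl => exact Good.base
  | tail _ hstep ih => exact good_step ih hstep

/-- Round-trip doubling: from a configuration whose pebbles avoid the window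
`(b, b + 2^g]` above a pebble `b`, with `g + 1` spare pebbles, one can
reversibly place a pebble at `b + 2^g`. -/
lemma key_double (n : ℕ) : ∀ g : ℕ, ∀ c : Finset ℕ, ∀ b : ℕ, b ∈ c →
    (∀ x ∈ c, x ≤ b ∨ b + 2 ^ g < x) → c.card + g + 1 ≤ n + 1 →
    Relation.ReflTransGen (PebbleStep n) c (insert (b + 2 ^ g) c) ∧
    Relation.ReflTransGen (PebbleStep n) (insert (b + 2 ^ g) c) c := by
  intro g
  induction g with
  | zero =>
    intro c b hb hx hcard
    have hb1 : b + 1 ∉ c := by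
      intro h
      rcases hx _ h with h' | h' <;> omega
    constructor
    · exact Relation.ReflTransGen.single
        ⟨b, hb, Or.inl ⟨by simpa using hb1, by omega, by norm_num⟩⟩
    · refine Relation.ReflTransGen.single
        ⟨b, Finset.mem_insert_of_mem hb, Or.inr ⟨by simp, ?_⟩⟩
      rw [show b + 2 ^ 0 = b + 1 by norm_num, Finset.erase_insert hb1]
  | succ g ih =>
    intro c b hb hx hcard
    have hpow : (2 : ℕ) ^ (g + 1) = 2 ^ g + 2 ^ g := by rw [pow_succ]; omega
    set m : ℕ := b + 2 ^ g with hm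
    set T : ℕ := b + 2 ^ (g + 1) with hT
    have hTm : T = m + 2 ^ g := by rw [hT, hm, hpow]; omega
    have hpos : 1 ≤ 2 ^ g := Nat.one_le_two_pow
    have hmc : m ∉ c := by
      intro h; rcases hx _ h with h' | h' <;> omega
    have hTc : T ∉ c := by
      intro h; rcases hx _ h with h' | h' <;> omega
    -- H1 : c ↔ insert m c
    have H1 := ih c b hb (fun x h => by rcases hx _ h with h' | h' <;> omega) (by omega)
    -- H2 : insert m c ↔ insert (m + 2^g) (insert m c)
    have H2 := ih (insert m c) m (Finset.mem_insert_self _ _)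
      (fun x h => by
        rcases Finset.mem_insert.1 h with rfl | h'
        · omega
        · rcases hx _ h' with h'' | h'' <;> omega)
      (by have := Finset.card_insert_le m c; omega)
    -- H3 : insert T c ↔ insert m (insert T c)
    have H3 := ih (insert T c) b (Finset.mem_insert_of_mem hb)
      (fun x h => by
        rcases Finset.mem_insert.1 h with rfl | h'
        · right; omega
        · rcases hx _ h' with h'' | h'' <;> omega)
      (by have := Finset.card_insert_le T c; omega)
    have e1 : insert (m + 2 ^ g) (insert m c) = insert m (insert T c) := by
      rw [← hTm, Finset.insert_comm]
    constructor
    · refine H1.1.trans (H2.1.trans ?_)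
      rw [e1]
      exact H3.2
    · refine (H3.1.trans ?_).trans H1.2
      rw [← e1]
      exact H2.2

lemma reach_top (n : ℕ) : ∀ k : ℕ, k ≤ n → ∃ c : Finset ℕ, PebbleReachable n c ∧
    c.card = k + 1 ∧ ∃ b ∈ c, b + 2 ^ (n - k) = 2 ^ n ∧ ∀ x ∈ c, x ≤ b := by
  intro k
  induction k with
  | zero =>
    intro _
    exact ⟨{0}, Relation.ReflTransGen.refl, by simp, 0, by simp⟩
  | succ k ih =>
    intro hk
    obtain ⟨c, hreach, hcard, b, hb, hbsum, hble⟩ := ih (by omega)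
    have hpos : 1 ≤ 2 ^ (n - (k + 1)) := Nat.one_le_two_pow
    have hsplit : 2 ^ (n - k) = 2 ^ (n - (k + 1)) + 2 ^ (n - (k + 1)) := by
      rw [show n - k = (n - (k + 1)) + 1 by omega, pow_succ]
      omega
    have H := key_double n (n - (k + 1)) c b hb
      (fun x h => Or.inl (hble x h)) (by omega)
    refine ⟨insert (b + 2 ^ (n - (k + 1))) c, hreach.trans H.1, ?_,
      b + 2 ^ (n - (k + 1)), Finset.mem_insert_self _ _, by omega, ?_⟩
    · rw [Finset.card_insert_of_notMem (fun h => by have := hble _ h; omega)]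
      omega
    · intro x h
      rcases Finset.mem_insert.1 h with rfl | h'
      · omega
      · have := hble x h'; omega

/-- The maximum node that can be pebbled with `n` pebbles is exactly `2^n - 1`:
some reachable configuration pebbles node `2^n - 1`, and no reachable
configuration pebbles any node beyond `2^n - 1`. -/
theorem pebble_max_reachable (n : ℕ) :
    (∃ c : Finset ℕ, PebbleReachable n c ∧ 2 ^ n - 1 ∈ c) ∧
    (∀ c : Finset ℕ, PebbleReachable n c → ∀ v ∈ c, v ≤ 2 ^ n - 1) := by
  constructor
  · obtain ⟨c, hreach, _, b, hb, hbsum, _⟩ := reach_top n n le_rfl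
    simp only [Nat.sub_self, pow_zero] at hbsum
    have : b = 2 ^ n - 1 := by
      have := Nat.one_le_two_pow (n := n); omega
    exact ⟨c, hreach, this ▸ hb⟩
  · intro c hreach v hv
    have hg := reachable_good hreach
    have h1 := good_bound hg v hv
    have h2 := (good_card hg).2
    have h3 : 1 ≤ 2 ^ (n + 1 - c.card) := Nat.one_le_two_pow
    omega
end

section
/- In the reversible pebble game, every weakly solvable configuration is strongly solvable: if there exists some order of repeatedly removing available pebbles that frees all pebbles, then every maximal sequence of removals of available pebbles frees all pebbles. -/
def Available (n : ℕ) (c : Finset ℕ) (p : ℕ) : Prop :=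
  p ∈ c ∧ ∃ q, (q = 0 ∨ q ∈ c) ∧ q < p ∧ p - q ≤ 2 ^ (n - c.card)

def RemStep (n : ℕ) (c c' : Finset ℕ) : Prop :=
  ∃ p, Available n c p ∧ c' = c.erase p

def WeaklySolvable (n : ℕ) (c : Finset ℕ) : Prop :=
  Relation.ReflTransGen (RemStep n) c ∅

def StronglySolvable (n : ℕ) (c : Finset ℕ) : Prop :=
  ∀ c', Relation.ReflTransGen (RemStep n) c c' →
    (¬ ∃ c'', RemStep n c' c'') → c' = ∅

lemma persist (n : ℕ) (c : Finset ℕ) (hc : c.card ≤ n) {r p : ℕ}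
    (hr : Available n c r) (hp : Available n c p) (hne : p ≠ r) :
    Available n (c.erase r) p := by
  obtain ⟨hpc, w, hw, hwp, hwb⟩ := hp
  obtain ⟨hrc, u, hu, hur, hub⟩ := hr
  have hE : n - (c.erase r).card = (n - c.card) + 1 := by
    rw [Finset.card_erase_of_mem hrc]
    have : 1 ≤ c.card := Finset.card_pos.mpr ⟨r, hrc⟩
    omega
  have h2 : (2:ℕ) ^ (n - (c.erase r).card) = 2 * 2 ^ (n - c.card) := by
    rw [hE, pow_succ]; ring
  refine ⟨Finset.mem_erase.mpr ⟨hne, hpc⟩, ?_⟩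
  by_cases hwr : w = r
  · refine ⟨u, ?_, ?_, ?_⟩
    · rcases hu with h | h
      · exact Or.inl h
      · exact Or.inr (Finset.mem_erase.mpr ⟨by omega, h⟩)
    · omega
    · rw [h2]; omega
  · refine ⟨w, ?_, hwp, ?_⟩
    · rcases hw with h | h
      · exact Or.inl h
      · exact Or.inr (Finset.mem_erase.mpr ⟨hwr, h⟩)
    · rw [h2]
      have : (2:ℕ)^(n - c.card) ≤ 2 * 2^(n - c.card) := by omega
      omega

lemma exchange (n : ℕ) : ∀ c : Finset ℕ, Relation.ReflTransGen (RemStep n) c ∅ →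
    c.card ≤ n → ∀ c', RemStep n c c' → Relation.ReflTransGen (RemStep n) c' ∅ := by
  intro c h
  induction h using Relation.ReflTransGen.head_induction_on with
  | refl =>
    intro _ c' hstep
    obtain ⟨p, ⟨hp, _⟩, _⟩ := hstep
    exact absurd hp (Finset.notMem_empty p)
  | head hstep hrest ih =>
    rename_i a d
    intro hcard c' hstep'
    obtain ⟨p, hp, rfl⟩ := hstep
    obtain ⟨q, hq, rfl⟩ := hstep'
    by_cases hpq : q = p
    · subst hpq; exact hrest
    · have h1 : Available n (a.erase q) p := persist n a hcard hq hp (fun h => hpq h.symm)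
      have h2 : Available n (a.erase p) q := persist n a hcard hp hq hpq
      have hd : (a.erase q).erase p = (a.erase p).erase q := Finset.erase_right_comm
      have step1 : RemStep n (a.erase q) ((a.erase p).erase q) := ⟨p, h1, hd.symm ▸ rfl⟩
      have tail : Relation.ReflTransGen (RemStep n) ((a.erase p).erase q) ∅ :=
        ih (le_trans (Finset.card_erase_le) hcard) _ ⟨q, h2, rfl⟩
      exact tail.head step1

lemma propagate (n : ℕ) (c c'' : Finset ℕ) (hpath : Relation.ReflTransGen (RemStep n) c c'')
    (hcard : c.card ≤ n) (hw : Relation.ReflTransGen (RemStep n) c ∅) :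
    c''.card ≤ n ∧ Relation.ReflTransGen (RemStep n) c'' ∅ := by
  induction hpath with
  | refl => exact ⟨hcard, hw⟩
  | tail hpath hstep ih =>
    obtain ⟨hc1, hc2⟩ := ih
    refine ⟨?_, exchange n _ hc2 hc1 _ hstep⟩
    obtain ⟨p, _, rfl⟩ := hstep
    exact le_trans Finset.card_erase_le hc1

/-- Every weakly solvable pebble configuration is strongly solvable. -/
theorem weakly_solvable_imp_strongly_solvable (n : ℕ) (c : Finset ℕ)
    (h0 : 0 ∉ c) (hcard : c.card ≤ n) (hw : WeaklySolvable n c) :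
    StronglySolvable n c := by
  intro c' hpath hstuck
  have h := propagate n c c' hpath hcard hw
  rcases (Relation.ReflTransGen.cases_head h.2) with h' | ⟨d, hd, _⟩
  · exact h'
  · exact absurd ⟨d, hd⟩ hstuck
end

section
/- A pebble configuration with f free pebbles (out of n total pebbles) is realizable in the reversible pebble game if and only if its placed pebbles can be numbered f, f+1, ..., n-1 so that for each i, pebble i has a higher-numbered pebble (or the fixed pebble at node 0) at most 2^i positions to its left. -/
/-- A good numbering of the placed pebbles of a configuration with `f` free
pebbles (out of `n`): a list `L` of the placed nodes, where the entry at
index `i` represents the pebble numbered `f + i`, such that each pebble `f+i`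
has a higher-numbered pebble (a later list entry, or the fixed pebble at node
0) at most `2^(f+i)` positions to its left. -/
def GoodNumbering (f : ℕ) (placed : Finset ℕ) : Prop :=
  ∃ L : List ℕ, L.Nodup ∧ L.toFinset = placed ∧
    ∀ i : Fin L.length, ∃ q, (q = 0 ∨ q ∈ L.drop (i.1 + 1)) ∧
      q < L.get i ∧ L.get i - q ≤ 2 ^ (f + i.1)

/-!
A good numbering is equivalently a list `GoodList f L` whose head is the pebble numbered `f`,
supported within `2 ^ f` by node 0 or a later entry, and whose tail is a `GoodList (f + 1)`.

Realizable ⇒ good, by induction on the moves. Placing a pebble on `i + 1` makes it the new head,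
supported by `i` at distance 1; one pebble fewer is free, so the old entries keep their numbers.
Removing a pebble `y` keeps the numbers of the pebbles after it and raises by one the number of
each pebble before it, doubling its bound; such a pebble that was supported by `y` is now
supported by `y`'s own support, at distance at most `2 ^ f + 2 ^ f`.

Good ⇒ realizable: place the pebbles from the highest number down. With `j + 1` free pebbles one
can place a pebble at distance `d ≤ 2 ^ j` to the right of a placed pebble `q`: if
`d > 2 ^ (j - 1)`, place the midpoint `q + 2 ^ (j - 1)` unless it is already there, from it the
target, and then remove the midpoint by running a placement of it backwards, each time with `j`
free pebbles.
-/

open Relation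

theorem PebbleStep.zero_mem {n : ℕ} {c c' : Finset ℕ} (h : PebbleStep n c c') (h0 : 0 ∈ c) :
    0 ∈ c' := by
  obtain ⟨i, -, ⟨-, -, rfl⟩ | ⟨-, rfl⟩⟩ := h
  · exact Finset.mem_insert_of_mem h0
  · exact Finset.mem_erase.2 ⟨(Nat.succ_ne_zero i).symm, h0⟩

theorem PebbleStep.card_le {n : ℕ} {c c' : Finset ℕ} (h : PebbleStep n c c')
    (hc : c.card ≤ n + 1) : c'.card ≤ n + 1 := by
  obtain ⟨i, -, ⟨hi, hlt, rfl⟩ | ⟨-, rfl⟩⟩ := h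
  · rw [Finset.card_insert_of_notMem hi]; omega
  · exact Finset.card_erase_le.trans hc

theorem PebbleStep.symm {n : ℕ} {c c' : Finset ℕ} (h : PebbleStep n c c')
    (hc : c.card ≤ n + 1) : PebbleStep n c' c := by
  obtain ⟨i, hi, ⟨hnot, -, rfl⟩ | ⟨hmem, rfl⟩⟩ := h
  · exact ⟨i, Finset.mem_insert_of_mem hi,
      Or.inr ⟨Finset.mem_insert_self _ _, (Finset.erase_insert hnot).symm⟩⟩
  · exact ⟨i, Finset.mem_erase.2 ⟨by omega, hi⟩, Or.inl ⟨Finset.notMem_erase _ _,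
      (Finset.card_erase_lt_of_mem hmem).trans_le hc, (Finset.insert_erase hmem).symm⟩⟩

theorem PebbleStep.reflTransGen_card_le {n : ℕ} {c c' : Finset ℕ}
    (h : ReflTransGen (PebbleStep n) c c') (hc : c.card ≤ n + 1) : c'.card ≤ n + 1 := by
  induction h with
  | refl => exact hc
  | tail _ hstep ih => exact hstep.card_le ih

theorem PebbleStep.reflTransGen_symm {n : ℕ} {c c' : Finset ℕ}
    (h : ReflTransGen (PebbleStep n) c c') (hc : c.card ≤ n + 1) :
    ReflTransGen (PebbleStep n) c' c := by
  induction h with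
  | refl => exact .refl
  | tail hreach hstep ih =>
    exact .head (hstep.symm (PebbleStep.reflTransGen_card_le hreach hc)) ih

theorem PebbleStep.reflTransGen_insert_of_le_two_pow {n : ℕ} (j : ℕ) {c : Finset ℕ} {q d : ℕ}
    (hq : q ∈ c) (hqd : q + d ∉ c) (hd : 0 < d) (hdj : d ≤ 2 ^ j) (hcard : c.card + j ≤ n) :
    ReflTransGen (PebbleStep n) c (insert (q + d) c) := by
  induction j generalizing c q d with
  | zero =>
    obtain rfl : d = 1 := by rw [pow_zero] at hdj; omega
    exact .single ⟨q, hq, Or.inl ⟨hqd, by omega, rfl⟩⟩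
  | succ j ih =>
    by_cases hdj' : d ≤ 2 ^ j
    · exact ih hq hqd hd hdj' (by omega)
    rw [pow_succ] at hdj
    obtain ⟨r, rfl⟩ : ∃ r, d = 2 ^ j + r := ⟨d - 2 ^ j, by omega⟩
    rw [← add_assoc] at hqd ⊢
    set m := q + 2 ^ j
    by_cases hm : m ∈ c
    · exact ih hm hqd (by omega) (by omega) (by omega)
    have hpos : 0 < 2 ^ j := by positivity
    have hmr : m + r ≠ m := by omega
    have place_mid := ih hq hm hpos le_rfl (by omega)
    have place_target : ReflTransGen (PebbleStep n) (insert m c) (insert (m + r) (insert m c)) :=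
      ih (Finset.mem_insert_self _ _) (by rw [Finset.mem_insert, not_or]; exact ⟨hmr, hqd⟩)
        (by omega) (by omega) (by rw [Finset.card_insert_of_notMem hm]; omega)
    have place_mid' :
        ReflTransGen (PebbleStep n) (insert (m + r) c) (insert m (insert (m + r) c)) :=
      ih (Finset.mem_insert_of_mem hq) (by rw [Finset.mem_insert, not_or]; exact ⟨hmr.symm, hm⟩)
        hpos le_rfl (by rw [Finset.card_insert_of_notMem hqd]; omega)
    rw [Finset.insert_comm] at place_target
    exact place_mid.trans <| place_target.trans <| PebbleStep.reflTransGen_symm place_mid'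
      (by rw [Finset.card_insert_of_notMem hqd]; omega)

def SupportedWithin (S : List ℕ) (r x : ℕ) : Prop :=
  ∃ q, (q = 0 ∨ q ∈ S) ∧ q < x ∧ x - q ≤ r

def GoodList : ℕ → List ℕ → Prop
  | _, [] => True
  | f, x :: L => SupportedWithin L (2 ^ f) x ∧ GoodList (f + 1) L

theorem goodList_iff_forall {f : ℕ} {L : List ℕ} : GoodList f L ↔
    ∀ i : Fin L.length, SupportedWithin (L.drop (i + 1)) (2 ^ (f + i)) (L.get i) := by
  induction L generalizing f with
  | nil => simp [GoodList]
  | cons x L ih =>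
    simp [GoodList, Fin.forall_fin_succ, ih, add_assoc, add_comm 1]

theorem goodNumbering_iff {f : ℕ} {P : Finset ℕ} :
    GoodNumbering f P ↔ ∃ L : List ℕ, L.Nodup ∧ L.toFinset = P ∧ GoodList f L := by
  simp only [goodList_iff_forall]
  rfl

theorem GoodList.erase {f y : ℕ} {L : List ℕ} (hL : GoodList f L)
    (hy : SupportedWithin (L.erase y) (2 ^ f) y) : GoodList (f + 1) (L.erase y) := by
  induction L generalizing f with
  | nil => trivial
  | cons x L ih =>
    obtain ⟨⟨q, hq, hqx, hxq⟩, hL⟩ := hL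
    by_cases hxy : x = y
    · subst hxy
      rwa [List.erase_cons_head]
    rw [List.erase_cons_tail (by simpa using hxy)] at hy ⊢
    obtain ⟨z, hz, hzy, hyz⟩ := hy
    rw [List.mem_cons] at hz
    have hpow : 2 ^ (f + 1) = 2 ^ f + 2 ^ f := by rw [pow_succ]; omega
    have erase_of_ne : ∀ {p}, p = 0 ∨ p ∈ L → p ≠ y → p = 0 ∨ p ∈ L.erase y :=
      fun hp hpy => hp.imp_right (List.mem_erase_of_ne hpy).2
    refine ⟨?_, ih hL ?_⟩
    · by_cases hqy : q = y
      · subst hqy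
        obtain rfl | rfl | hz := hz
        · exact ⟨0, .inl rfl, by omega, by omega⟩
        · omega
        · exact ⟨z, .inr hz, by omega, by omega⟩
      · exact ⟨q, erase_of_ne hq hqy, hqx, by omega⟩
    · obtain rfl | rfl | hz := hz
      · exact ⟨0, .inl rfl, hzy, by omega⟩
      · exact ⟨q, erase_of_ne hq (by omega), by omega, by omega⟩
      · exact ⟨z, .inr hz, hzy, by omega⟩

theorem GoodList.reflTransGen {n f : ℕ} {L : List ℕ} (hL : GoodList f L) (hnd : L.Nodup)
    (h0 : 0 ∉ L) (hlen : f + L.length ≤ n) :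
    ReflTransGen (PebbleStep n) {0} (insert 0 L.toFinset) := by
  induction L generalizing f with
  | nil => exact .refl
  | cons x L ih =>
    obtain ⟨⟨q, hq, hqx, hxq⟩, hL⟩ := hL
    obtain ⟨hxL, hnd⟩ := List.nodup_cons.1 hnd
    rw [List.length_cons] at hlen
    have place_rest := ih hL hnd (fun h => h0 (List.mem_cons_of_mem _ h)) (by omega)
    have hq' : q ∈ insert 0 L.toFinset := by simpa [eq_comm] using hq
    have hx : x ∉ insert 0 L.toFinset := by
      simpa [hxL] using fun h : x = 0 => h0 (h ▸ List.mem_cons_self)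
    have hcard : (insert 0 L.toFinset).card ≤ L.length + 1 :=
      (Finset.card_insert_le _ _).trans (Nat.succ_le_succ L.toFinset_card_le)
    have place_x := PebbleStep.reflTransGen_insert_of_le_two_pow (n := n) f hq'
      (by rwa [Nat.add_sub_cancel' hqx.le]) (by omega) hxq (by omega)
    rw [Nat.add_sub_cancel' hqx.le, Finset.insert_comm] at place_x
    simpa using place_rest.trans place_x

theorem PebbleStep.goodNumbering {n : ℕ} {c c' : Finset ℕ} (hstep : PebbleStep n c c')
    (h0 : 0 ∈ c) (hc : c.card ≤ n + 1)
    (hgood : GoodNumbering (n - (c.erase 0).card) (c.erase 0)) :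
    GoodNumbering (n - (c'.erase 0).card) (c'.erase 0) := by
  rw [goodNumbering_iff] at hgood ⊢
  obtain ⟨L, hnd, hL, hgood⟩ := hgood
  have hk := Finset.card_erase_add_one h0
  have eq_zero_or_mem : ∀ {p}, p ∈ c → p = 0 ∨ p ∈ L := fun {p} hp => by
    rw [← List.mem_toFinset, hL, Finset.mem_erase]
    exact (eq_or_ne p 0).imp_right (⟨·, hp⟩)
  obtain ⟨i, hi, ⟨hnot, hlt, rfl⟩ | ⟨hmem, rfl⟩⟩ := hstep
  · have hnotP : i + 1 ∉ c.erase 0 := fun h => hnot (Finset.mem_of_mem_erase h)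
    rw [Finset.erase_insert_of_ne (Nat.succ_ne_zero i), Finset.card_insert_of_notMem hnotP]
    refine ⟨(i + 1) :: L, List.nodup_cons.2 ⟨fun h => hnotP (hL ▸ List.mem_toFinset.2 h), hnd⟩,
      by rw [List.toFinset_cons, hL], ⟨i, eq_zero_or_mem hi, by omega,
        by rw [Nat.add_sub_cancel_left]; exact Nat.one_le_two_pow⟩, ?_⟩
    rwa [show n - ((c.erase 0).card + 1) + 1 = n - (c.erase 0).card by omega]
  · have hmemP : i + 1 ∈ c.erase 0 := Finset.mem_erase.2 ⟨Nat.succ_ne_zero i, hmem⟩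
    have hpos : 0 < (c.erase 0).card := Finset.card_pos.2 ⟨_, hmemP⟩
    rw [Finset.erase_right_comm, Finset.card_erase_of_mem hmemP]
    refine ⟨L.erase (i + 1), hnd.erase _, ?_, ?_⟩
    · ext p
      rw [List.mem_toFinset, hnd.mem_erase_iff, ← hL, Finset.mem_erase, List.mem_toFinset]
    · rw [show n - ((c.erase 0).card - 1) = n - (c.erase 0).card + 1 by omega]
      exact hgood.erase ⟨i, (eq_zero_or_mem hi).imp_right (List.mem_erase_of_ne (by omega)).2,
        by omega, by rw [Nat.add_sub_cancel_left]; exact Nat.one_le_two_pow⟩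

theorem PebbleReachable.goodNumbering {n : ℕ} {c : Finset ℕ} (h : PebbleReachable n c) :
    0 ∈ c ∧ c.card ≤ n + 1 ∧ GoodNumbering (n - (c.erase 0).card) (c.erase 0) := by
  induction h with
  | refl =>
    exact ⟨Finset.mem_singleton_self 0, by simp,
      goodNumbering_iff.2 ⟨[], List.nodup_nil, by simp, trivial⟩⟩
  | tail _ hstep ih =>
    obtain ⟨h0, hc, hgood⟩ := ih
    exact ⟨hstep.zero_mem h0, hstep.card_le hc, hstep.goodNumbering h0 hc hgood⟩

/-- A pebble configuration (with the fixed pebble at node 0 and `n` movable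
pebbles, of which `f = n - #placed` are free) is realizable if and only if
its placed pebbles admit a good numbering. -/
theorem realizable_iff_goodNumbering (n : ℕ) (c : Finset ℕ) (h0 : 0 ∈ c)
    (hcard : c.card ≤ n + 1) :
    PebbleReachable n c ↔ GoodNumbering (n - (c.erase 0).card) (c.erase 0) := by
  refine ⟨fun h => h.goodNumbering.2.2, fun hgood => ?_⟩
  obtain ⟨L, hnd, hL, hgood⟩ := goodNumbering_iff.1 hgood
  have hlen : L.length = (c.erase 0).card := by rw [← hL, List.toFinset_card_of_nodup hnd]
  have hk := Finset.card_erase_add_one h0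
  have h0L : 0 ∉ L := fun h => by simpa [hL] using List.mem_toFinset.2 h
  have reach := hgood.reflTransGen (n := n) hnd h0L (by omega)
  rwa [hL, Finset.insert_erase h0] at reach
end

section
/- Bennett's recursive pebbling procedure pebble(s,t,n), defined by: if n = 0 perform a single bridge step from s to its successor t, and if n > 0 recursively call pebble(s,r,n-1), pebble(r,t,n-1), pebble(s,r,n-1), correctly toggles (XORs) a pebble at the node 2^n positions beyond the node pebbled by s, using only the free pebbles 0,...,n-1 as intermediate storage, and it is its own inverse (executing it twice produces no net change in the configuration). -/
/-- A pebble configuration: each pebble index (an integer; pebble `-1` is the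
fixed one) is either free (`none`) or placed on a game node (`some v`). -/
abbrev Config := ℤ → Option ℕ

/-- `bridge s t` toggles pebble `t` between being free and being placed on
the node immediately following the node of pebble `s`. -/
def bridge (s t : ℤ) (c : Config) : Config :=
  match c s with
  | none => c
  | some v =>
      Function.update c t
        (match c t with
         | none => some (v + 1)
         | some _ => none)

/-- Bennett's recursive pebbling procedure `pebble(s,t,n)`: for `n = 0`
perform a single bridge step from `s` to `t`; for `n+1`, with `r = n`,
perform `pebble(s,r,n)`, then `pebble(r,t,n)`, then `pebble(s,r,n)`. -/
def pebbleProc : ℕ → ℤ → ℤ → Config → Config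
  | 0, s, t, c => bridge s t c
  | n + 1, s, t, c => pebbleProc n s n (pebbleProc n n t (pebbleProc n s n c))

/-- Correctness of Bennett's procedure: if pebbles `0,…,n-1` are free, `s`
and `t` lie outside `{0,…,n-1}`, `s ≠ t`, and pebble `s` sits on node `v`,
then `pebble(s,t,n)` leaves pebbles `0,…,n-1` free, toggles pebble `t`'s
status on node `v + 2^n`, leaves every other pebble unchanged, and is its own
inverse (running it twice produces no net change). -/
theorem pebbleProc_correct (n : ℕ) (s t : ℤ) (c : Config) (v : ℕ)
    (hfree : ∀ i : ℤ, 0 ≤ i → i < (n : ℤ) → c i = none)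
    (hs : s < 0 ∨ (n : ℤ) ≤ s) (ht : t < 0 ∨ (n : ℤ) ≤ t) (hst : s ≠ t)
    (hcs : c s = some v)
    (htog : c t = none ∨ c t = some (v + 2 ^ n)) :
    (∀ i : ℤ, 0 ≤ i → i < (n : ℤ) → pebbleProc n s t c i = none) ∧
    (pebbleProc n s t c t =
      if c t = none then some (v + 2 ^ n) else none) ∧
    (∀ i : ℤ, i ≠ t → pebbleProc n s t c i = c i) ∧
    pebbleProc n s t (pebbleProc n s t c) = c := by
  induction n generalizing s t c v with
  | zero =>
    simp only [pebbleProc, pow_zero] at htog ⊢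
    set d := bridge s t c with hd
    have h1 : d s = some v := by
      rw [hd]; simp only [bridge, hcs]; rw [Function.update_of_ne hst, hcs]
    have h2 : d t = if c t = none then some (v + 1) else none := by
      rw [hd]; simp only [bridge, hcs, Function.update_self]
      rcases htog with h | h <;> simp [h]
    have h3 : ∀ i, i ≠ t → d i = c i := by
      intro i hi; rw [hd]; simp only [bridge, hcs]
      exact Function.update_of_ne hi _ _
    refine ⟨fun i a b => by omega, h2, h3, ?_⟩
    funext x
    by_cases hx : x = t
    · subst hx
      simp only [bridge, h1, Function.update_self]
      rcases htog with h | h <;> simp [h2, h]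
    · simp only [bridge, h1]
      rw [Function.update_of_ne hx, h3 x hx]
  | succ n ih =>
    have hfree' : ∀ i : ℤ, 0 ≤ i → i < (n : ℤ) → c i = none :=
      fun i h1 h2 => hfree i h1 (by push_cast; omega)
    have hcn : c (n : ℤ) = none := hfree n (by positivity) (by push_cast; omega)
    have hsn : s ≠ (n : ℤ) := by
      rcases hs with h | h <;> push_cast at h <;> omega
    have htn : t ≠ (n : ℤ) := by
      rcases ht with h | h <;> push_cast at h <;> omega
    have hs' : s < 0 ∨ (n : ℤ) ≤ s := by
      rcases hs with h | h
      · exact Or.inl h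
      · right; push_cast at h; omega
    have ht' : t < 0 ∨ (n : ℤ) ≤ t := by
      rcases ht with h | h
      · exact Or.inl h
      · right; push_cast at h; omega
    obtain ⟨f1, t1, o1, inv1⟩ :=
      ih s n c v hfree' hs' (Or.inr le_rfl) hsn hcs (Or.inl hcn)
    set c1 := pebbleProc n s n c with hc1def
    have hc1n : c1 (n : ℤ) = some (v + 2 ^ n) := by rw [t1]; simp [hcn]
    have hc1t : c1 t = c t := o1 t htn
    have htog2 : c1 t = none ∨ c1 t = some (v + 2 ^ n + 2 ^ n) := by
      rw [hc1t]
      rcases htog with h | h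
      · exact Or.inl h
      · right; rw [h]; congr 1; ring_nf
    obtain ⟨f2, t2, o2, inv2⟩ :=
      ih (n : ℤ) t c1 (v + 2 ^ n) f1 (Or.inr le_rfl) ht' (Ne.symm htn) hc1n htog2
    set c2 := pebbleProc n (n : ℤ) t c1 with hc2def
    have hc2n : c2 (n : ℤ) = some (v + 2 ^ n) := by
      rw [o2 (n : ℤ) (Ne.symm htn), hc1n]
    have hc2s : c2 s = some v := by
      rw [o2 s hst, o1 s hsn, hcs]
    obtain ⟨f3, t3, o3, inv3⟩ :=
      ih s (n : ℤ) c2 v f2 hs' (Or.inr le_rfl) hsn hc2s (Or.inr hc2n)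
    set c3 := pebbleProc n s (n : ℤ) c2 with hc3def
    have hc3n : c3 (n : ℤ) = none := by rw [t3]; simp [hc2n]
    have hgoal : pebbleProc (n + 1) s t c = c3 := by
      simp only [pebbleProc, ← hc1def, ← hc2def, ← hc3def]
    refine ⟨?_, ?_, ?_, ?_⟩
    · intro i h1 h2
      rw [hgoal]
      by_cases hi : i = (n : ℤ)
      · rw [hi]; exact hc3n
      · exact f3 i h1 (by push_cast at h2; omega)
    · rw [hgoal, o3 t htn, t2, hc1t]
      rcases htog with h | h
      · rw [h]; simp only [if_pos rfl, pow_succ]; congr 1; ring_nf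
      · rw [h]; simp
    · intro i hi
      rw [hgoal]
      by_cases hin : i = (n : ℤ)
      · rw [hin, hc3n, hcn]
      · rw [o3 i hin, o2 i hi, o1 i hin]
    · rw [hgoal]
      show pebbleProc n s (n : ℤ) (pebbleProc n (n : ℤ) t (pebbleProc n s (n : ℤ) c3)) = c
      rw [hc3def, inv3, hc2def, inv2, hc1def, inv1]
end

section
/- In the m-erasure reversible pebble game, there is a winning strategy reaching node m·2^n using n+2 pebbles and at most m-1 erasure moves, for every m ≥ 1 and n ≥ 0. -/
/-- A state of the erasure pebble game: the set of pebbled nodes (node 0 is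
permanently pebbled) together with the number of erasure moves used so far. -/
abbrev EState := Finset ℕ × ℕ

/-- One move of the `m`-erasure reversible pebble game with `n` movable
pebbles: place a free pebble on node `i+1` or remove the pebble from node
`i+1` when node `i` is pebbled (no erasure charged), or remove a pebble from
a node `i > 1` whose predecessor `i-1` is unpebbled (one erasure charged). -/
def EStep (n : ℕ) (s s' : EState) : Prop :=
  (∃ i, i ∈ s.1 ∧ i + 1 ∉ s.1 ∧ s.1.card < n + 1 ∧
      s' = (insert (i + 1) s.1, s.2)) ∨
  (∃ i, i ∈ s.1 ∧ i + 1 ∈ s.1 ∧ s' = (s.1.erase (i + 1), s.2)) ∨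
  (∃ i, i ∈ s.1 ∧ 1 < i ∧ i - 1 ∉ s.1 ∧ s' = (s.1.erase i, s.2 + 1))

/-- Reachability from the initial state: only node 0 pebbled, no erasures. -/
def EReachable (n : ℕ) (s : EState) : Prop :=
  Relation.ReflTransGen (EStep n) ({0}, 0) s


/-!
Bennett's reversible strategy: with `k + 1` free pebbles and a pebble on `a`, node `a + 2^k`
can be pebbled and unpebbled again without erasures, by pebbling the midpoint `a + 2^(k-1)`,
recursing from there, and then unpebbling the midpoint by running its strategy backwards.
Using it with `n + 1` pebbles from a pebble on `j·2^n` pebbles `(j+1)·2^n`, after which one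
erasure frees the pebble on `j·2^n`; the `m - 1` blocks of length `2^n` after the first cost
one erasure each.
-/

namespace EStep

variable {N e a : ℕ} {s : Finset ℕ}

theorem insert_succ (ha : a ∈ s) (hs : a + 1 ∉ s) (hcard : s.card ≤ N) :
    EStep N (s, e) (insert (a + 1) s, e) :=
  Or.inl ⟨a, ha, hs, Nat.lt_succ_of_le hcard, rfl⟩

theorem erase_succ (ha : a ∈ s) (hs : a + 1 ∉ s) :
    EStep N (insert (a + 1) s, e) (s, e) :=
  Or.inr <| Or.inl ⟨a, Finset.mem_insert_of_mem ha, Finset.mem_insert_self _ _, by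
    rw [Finset.erase_insert hs]⟩

theorem exists_erase (h0 : 0 ∈ s) (ha : a ∈ s) (hpred : a = 1 ∨ 1 < a ∧ a - 1 ∉ s) :
    ∃ e' ≤ e + 1, EStep N (s, e) (s.erase a, e') := by
  rcases hpred with rfl | ⟨h1, hpred⟩
  · exact ⟨e, Nat.le_succ e, Or.inr <| Or.inl ⟨0, h0, ha, rfl⟩⟩
  · exact ⟨e + 1, le_rfl, Or.inr <| Or.inr ⟨a, ha, h1, hpred, rfl⟩⟩

end EStep

theorem antisymmRel_insert_add_two_pow {N e : ℕ} (k a : ℕ) {s : Finset ℕ} (ha : a ∈ s)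
    (hfree : ∀ x, a < x → x ≤ a + 2 ^ k → x ∉ s) (hcard : s.card + k ≤ N) :
    AntisymmRel (Relation.ReflTransGen (EStep N)) (s, e) (insert (a + 2 ^ k) s, e) := by
  induction k generalizing a s with
  | zero =>
    have hs : a + 1 ∉ s := hfree _ (by omega) (by simp)
    exact ⟨.single (EStep.insert_succ ha hs (by omega)), .single (EStep.erase_succ ha hs)⟩
  | succ k ih =>
    have hpow : 2 ^ (k + 1) = 2 ^ k + 2 ^ k := by rw [pow_succ]; omega
    have hpos : 0 < 2 ^ k := Nat.two_pow_pos k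
    set b := a + 2 ^ k
    have hb : b ∉ s := hfree _ (by omega) (by omega)
    have hc : b + 2 ^ k ∉ s := hfree _ (by omega) (by omega)
    have mid : AntisymmRel _ (s, e) (insert b s, e) :=
      ih a ha (fun x hx hxb => hfree x hx (by omega)) (by omega)
    have endFromMid : AntisymmRel _ (insert b s, e) (insert (b + 2 ^ k) (insert b s), e) :=
      ih b (Finset.mem_insert_self _ _)
        (fun x hx hxc => by simpa [hx.ne'] using hfree x (by omega) (by omega))
        (by rw [Finset.card_insert_of_notMem hb]; omega)
    have midWithEnd :
        AntisymmRel _ (insert (b + 2 ^ k) s, e) (insert b (insert (b + 2 ^ k) s), e) :=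
      ih a (Finset.mem_insert_of_mem ha)
        (fun x hx hxb => by
          have hxc : x ≠ b + 2 ^ k := by omega
          simpa [hxc] using hfree x hx (by omega))
        (by rw [Finset.card_insert_of_notMem hc]; omega)
    rw [Finset.insert_comm] at midWithEnd
    rw [hpow, ← add_assoc]
    exact (mid.trans endFromMid).trans midWithEnd.symm

theorem exists_eReachable_pair (n : ℕ) {m : ℕ} (hm : 1 ≤ m) :
    ∃ e ≤ m - 1, EReachable (n + 2) ({0, m * 2 ^ n}, e) := by
  induction m, hm using Nat.le_induction with
  | base =>
    refine ⟨0, le_rfl, ?_⟩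
    simpa [EReachable, Finset.pair_comm] using
      (antisymmRel_insert_add_two_pow (N := n + 2) (e := 0) n 0 (Finset.mem_singleton_self 0)
        (fun x hx _ => by simpa using hx.ne') (by simp; omega)).1
  | succ j hj ih =>
    obtain ⟨e, he, hreach⟩ := ih
    set a := j * 2 ^ n
    have ha : 1 ≤ a := Nat.one_le_iff_ne_zero.2 (by positivity)
    have hpos : 0 < 2 ^ n := Nat.two_pow_pos n
    have hpebble := (antisymmRel_insert_add_two_pow (N := n + 2) (e := e) n a
      (s := {0, a}) (by simp) (fun x hx _ => by simp; omega)
      (by rw [Finset.card_pair (by omega)]; omega)).1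
    obtain ⟨e', he', herase⟩ := EStep.exists_erase (N := n + 2) (e := e) (a := a)
      (s := insert (a + 2 ^ n) {0, a}) (by simp) (by simp) (by simp; omega)
    have hstate : (insert (a + 2 ^ n) ({0, a} : Finset ℕ)).erase a = {0, (j + 1) * 2 ^ n} := by
      ext x; simp [a, add_mul]; omega
    exact ⟨e', by omega, hstate ▸ (hreach.trans hpebble).tail herase⟩

/-- In the erasure pebble game, node `m·2^n` can be pebbled using `n+2`
pebbles and at most `m-1` erasure moves, for every `m ≥ 1`. -/
theorem erasure_pebble_strategy (m n : ℕ) (hm : 1 ≤ m) :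
    ∃ s : EState, EReachable (n + 2) s ∧ m * 2 ^ n ∈ s.1 ∧ s.2 ≤ m - 1 := by
  obtain ⟨e, he, hreach⟩ := exists_eReachable_pair n hm
  exact ⟨({0, m * 2 ^ n}, e), hreach, by simp, he⟩
end

section
/- For any geometrically growing cost g(i) = 3^i, the total cost of Bennett's pebbling of a game of length 2^n - 1 satisfies T'_G = (3^{n+1} - 1)/2, and hence T'_G ≤ 2·(T_G + 1)^{log₂ 3} where T_G = 2^n - 1. -/
/-- The number of bridge steps of Bennett's pebbling strategy:
`t 0 = 1`, `t (n+1) = 3·t n + 1`. -/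
def bridgeCount : ℕ → ℕ
  | 0 => 1
  | n + 1 => 3 * bridgeCount n + 1

lemma two_mul_bridge (n : ℕ) : 2 * bridgeCount n + 1 = 3 ^ (n + 1) := by
  induction n with
  | zero => rfl
  | succ k ih =>
    rw [bridgeCount]
    ring_nf
    ring_nf at ih
    omega

/-- For Bennett's pebbling of a game of length `T_G = 2^n - 1`, the total
number of bridge steps is `T'_G = (3^(n+1) - 1)/2`, and hence
`T'_G ≤ 2·(T_G + 1)^(log₂ 3)`. -/
theorem bennett_time_bound (n : ℕ) :
    bridgeCount n = (3 ^ (n + 1) - 1) / 2 ∧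
    (bridgeCount n : ℝ) ≤
      2 * (((2 ^ n - 1 : ℕ) + 1 : ℝ)) ^ (Real.logb 2 3) := by
  have h := two_mul_bridge n
  constructor
  · omega
  · have h1 : (((2 ^ n - 1 : ℕ) + 1 : ℝ)) = (2 : ℝ) ^ (n : ℕ) := by
      have : (1 : ℕ) ≤ 2 ^ n := Nat.one_le_two_pow
      push_cast [this]
      ring
    rw [h1, ← Real.rpow_natCast (2 : ℝ) n, ← Real.rpow_mul (by norm_num),
      mul_comm (n : ℝ), Real.rpow_mul (by norm_num),
      Real.rpow_logb (by norm_num) (by norm_num) (by norm_num),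
      Real.rpow_natCast]
    have hb : (bridgeCount n : ℝ) ≤ 2 * 3 ^ n := by
      have : 2 * bridgeCount n ≤ 4 * 3 ^ n := by
        have h3 : 3 ^ (n + 1) = 3 * 3 ^ n := pow_succ' 3 n
        omega
      have := (Nat.cast_le (α := ℝ)).mpr this
      push_cast at this
      linarith
    exact hb
end

section
/- The irreversibility cost function is symmetric: for the universal reversible Turing machine, E(x,y) = E(y,x) for all strings x, y, up to an additive constant independent of x and y. -/
/-- A (possibly partial) machine mapping a pair (data, program) of binary
strings to a pair (data, garbage). -/
abbrev Machine := List Bool × List Bool → Option (List Bool × List Bool)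

/-- A machine is reversible if its input can always be deduced from its
output: no two inputs yield the same (defined) output. -/
def Reversible (R : Machine) : Prop :=
  ∀ a b o, R a = some o → R b = some o → a = b

/-- The irreversibility cost `E_R(x,y)`: the minimal total length `|p| + |q|`
of an auxiliary program `p` and garbage `q` with `R⟨x,p⟩ = ⟨y,q⟩`. -/
noncomputable def costE (R : Machine) (x y : List Bool) : ℕ∞ :=
  ⨅ (p : List Bool) (q : List Bool) (_ : R (x, p) = some (y, q)),
    ((p.length + q.length : ℕ) : ℕ∞)

/-!
Running a reversible machine backwards turns a computation `⟨x,p⟩ ↦ ⟨y,q⟩` into a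
computation `⟨y,q⟩ ↦ ⟨x,p⟩` of the same cost `|p| + |q|`, and the inverse machine is again
reversible. Universality then bounds `E(y,x)` by the inverse machine's cost, i.e. by `E(x,y)`,
up to the constant of the inverse machine.
-/

open Classical in
noncomputable def Machine.inverse (R : Machine) : Machine :=
  fun o => if h : ∃ a, R a = some o then some h.choose else none

namespace Machine

lemma inverse_apply_of_apply {R : Machine} (hR : Reversible R) {a o : List Bool × List Bool}
    (ha : R a = some o) : R.inverse o = some a := by
  have h : ∃ a', R a' = some o := ⟨a, ha⟩
  rw [inverse, dif_pos h]
  exact congrArg some (hR _ _ _ h.choose_spec ha)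

lemma apply_of_inverse_apply {R : Machine} {a o : List Bool × List Bool}
    (ha : R.inverse o = some a) : R a = some o := by
  rw [inverse] at ha
  split_ifs at ha with h
  exact Option.some_inj.mp ha ▸ h.choose_spec

lemma reversible_inverse (R : Machine) : Reversible R.inverse :=
  fun _ _ _ ha hb => Option.some_inj.mp ((apply_of_inverse_apply ha).symm.trans
    (apply_of_inverse_apply hb))

lemma costE_inverse_le {R : Machine} (hR : Reversible R) (x y : List Bool) :
    costE R.inverse y x ≤ costE R x y := by
  refine le_iInf₂ fun p q => le_iInf fun hpq => ?_
  refine iInf₂_le_of_le q p <| iInf_le_of_le (inverse_apply_of_apply hR hpq) ?_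
  rw [Nat.add_comm]

end Machine

/-- The irreversibility cost is symmetric up to an additive constant: for a
universal reversible machine `UR` (one that is reversible and minimizes the
cost up to an additive constant among all reversible machines),
`E(x,y) = E(y,x)` up to an additive constant independent of `x` and `y`. -/
theorem costE_symmetric (UR : Machine) (hrev : Reversible UR)
    (huniv : ∀ R : Machine, Reversible R →
      ∃ cR : ℕ, ∀ x y, costE UR x y ≤ costE R x y + cR) :
    ∃ c : ℕ, ∀ x y : List Bool,
      costE UR x y ≤ costE UR y x + c ∧ costE UR y x ≤ costE UR x y + c := by
  obtain ⟨c, hc⟩ := huniv UR.inverse UR.reversible_inverse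
  have hswap : ∀ x y, costE UR x y ≤ costE UR y x + c := fun x y =>
    (hc x y).trans (add_le_add_left (Machine.costE_inverse_le hrev y x) _)
  exact ⟨c, fun x y => ⟨hswap x y, hswap y x⟩⟩
end

section
/- In the reversible pebble game of length 2^n - 1, no strategy using only n - 1 pebbles can place a pebble on node 2^n - 1. -/
/-- Every nonzero pebble has a higher-numbered pebble to its left within
distance `2 ^ (its own number)`. -/
def PebCond (c : Finset ℕ) (g : ℕ → ℕ) : Prop :=
  ∀ p ∈ c, p ≠ 0 → ∃ q ∈ c, q < p ∧ g p < g q ∧ p ≤ q + 2 ^ g p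

/-- The invariant: node 0 is pebbled, at most `m` pebbles, and the pebbles can
be numbered injectively with numbers in `[m - card, m)` satisfying `PebCond`. -/
def PebInv (m : ℕ) (c : Finset ℕ) : Prop :=
  0 ∈ c ∧ c.card ≤ m ∧ ∃ g : ℕ → ℕ, Set.InjOn g ↑c ∧
    (∀ p ∈ c, m - c.card ≤ g p ∧ g p < m) ∧ PebCond c g

lemma peb_lt_g0 {c : Finset ℕ} {g : ℕ → ℕ} {m : ℕ}
    (hg : ∀ p ∈ c, g p < m) (W : PebCond c g) :
    ∀ p ∈ c, p ≠ 0 → g p < g 0 := by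
  suffices H : ∀ k, ∀ p ∈ c, p ≠ 0 → m - g p ≤ k → g p < g 0 by
    exact fun p hp h0 => H m p hp h0 (Nat.sub_le _ _)
  intro k
  induction k with
  | zero =>
    intro p hp h0 hk
    have := hg p hp; omega
  | succ k ih =>
    intro p hp h0 hk
    obtain ⟨q, hq, _, hlt, _⟩ := W p hp h0
    rcases eq_or_ne q 0 with rfl | hq0
    · exact hlt
    · have hqm := hg q hq
      have hpm := hg p hp
      exact lt_trans hlt (ih q hq hq0 (by omega))

/-- Chain lemma: from a nonzero pebble `r` with number `≤ T < g 0`, following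
witnesses we find a pebble `u` strictly left of `r` with number `> T` and
`r + 2 ^ g r ≤ u + 2 ^ (T + 1)`. -/
lemma peb_chain {c : Finset ℕ} {g : ℕ → ℕ} {m T : ℕ}
    (hg : ∀ p ∈ c, g p < m) (W : PebCond c g) (hT : T < g 0) :
    ∀ r ∈ c, r ≠ 0 → g r ≤ T → ∃ u ∈ c, u < r ∧ T < g u ∧
      r + 2 ^ g r ≤ u + 2 ^ (T + 1) := by
  suffices H : ∀ k, ∀ r ∈ c, r ≠ 0 → g r ≤ T → m - g r ≤ k →
      ∃ u ∈ c, u < r ∧ T < g u ∧ r + 2 ^ g r ≤ u + 2 ^ (T + 1) by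
    exact fun r hr h0 hgr => H m r hr h0 hgr (Nat.sub_le _ _)
  intro k
  induction k with
  | zero =>
    intro r hr h0 hgr hk
    have := hg r hr; omega
  | succ k ih =>
    intro r hr h0 hgr hk
    obtain ⟨q, hq, hqr, hlt, hd⟩ := W r hr h0
    rcases le_or_gt (g q) T with hqT | hqT
    · have hq0 : q ≠ 0 := by rintro rfl; omega
      have hqm := hg q hq
      have hrm := hg r hr
      obtain ⟨u, hu, huq, hTu, hdu⟩ := ih q hq hq0 hqT (by omega)
      refine ⟨u, hu, lt_trans huq hqr, hTu, ?_⟩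
      -- r + 2^{g r} ≤ q + 2^{g r} + 2^{g r} = q + 2^{g r + 1} ≤ q + 2^{g q} ≤ u + 2^{T+1}
      have h1 : (2:ℕ) ^ (g r + 1) ≤ 2 ^ g q :=
        Nat.pow_le_pow_right (by norm_num) (by omega)
      have h2 : (2:ℕ) ^ (g r + 1) = 2 ^ g r + 2 ^ g r := by
        rw [pow_succ, mul_two]
      calc r + 2 ^ g r ≤ (q + 2 ^ g r) + 2 ^ g r := by omega
        _ = q + 2 ^ (g r + 1) := by omega
        _ ≤ q + 2 ^ g q := by omega
        _ ≤ u + 2 ^ (T + 1) := hdu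
    · refine ⟨q, hq, hqr, hqT, ?_⟩
      have h1 : (2:ℕ) ^ (g r + 1) ≤ 2 ^ (T + 1) :=
        Nat.pow_le_pow_right (by norm_num) (by omega)
      have h2 : (2:ℕ) ^ (g r + 1) = 2 ^ g r + 2 ^ g r := by
        rw [pow_succ, mul_two]
      calc r + 2 ^ g r ≤ (q + 2 ^ g r) + 2 ^ g r := by omega
        _ = q + 2 ^ (g r + 1) := by omega
        _ ≤ q + 2 ^ (T + 1) := by omega

/-- Position bound from the invariant numbering. -/
lemma peb_bound {c : Finset ℕ} {g : ℕ → ℕ} {m : ℕ} (hm : 1 ≤ m)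
    (hg : ∀ p ∈ c, g p < m) (W : PebCond c g) :
    ∀ p ∈ c, p + 2 ^ g p ≤ 2 ^ (m - 1) := by
  suffices H : ∀ k, ∀ p ∈ c, m - g p ≤ k → p + 2 ^ g p ≤ 2 ^ (m - 1) by
    exact fun p hp => H m p hp (Nat.sub_le _ _)
  intro k
  induction k with
  | zero =>
    intro p hp hk
    have := hg p hp; omega
  | succ k ih =>
    intro p hp hk
    rcases eq_or_ne p 0 with rfl | h0
    · have : (2:ℕ) ^ g 0 ≤ 2 ^ (m - 1) :=
        Nat.pow_le_pow_right (by norm_num) (by have := hg 0 hp; omega)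
      omega
    · obtain ⟨q, hq, hqp, hlt, hd⟩ := W p hp h0
      have hqm := hg q hq
      have hpm := hg p hp
      have h1 : (2:ℕ) ^ (g p + 1) ≤ 2 ^ g q :=
        Nat.pow_le_pow_right (by norm_num) (by omega)
      have h2 : (2:ℕ) ^ (g p + 1) = 2 ^ g p + 2 ^ g p := by
        rw [pow_succ, mul_two]
      have h3 := ih q hq (by omega)
      calc p + 2 ^ g p ≤ (q + 2 ^ g p) + 2 ^ g p := by omega
        _ = q + 2 ^ (g p + 1) := by omega
        _ ≤ q + 2 ^ g q := by omega
        _ ≤ 2 ^ (m - 1) := by omega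

/-- The invariant is preserved by a pebble move. -/
lemma peb_step {k : ℕ} {c c' : Finset ℕ} (h : PebbleStep k c c')
    (hI : PebInv (k + 1) c) : PebInv (k + 1) c' := by
  obtain ⟨h0, hcard, g, hinj, hrange, W⟩ := hI
  obtain ⟨i, hi, hcase⟩ := h
  set m := k + 1 with hm
  rcases hcase with ⟨hx, hlt, rfl⟩ | ⟨hx, rfl⟩
  · -- place a pebble on x = i + 1
    set x := i + 1 with hxdef
    have h0' : (0:ℕ) ∈ insert x c := Finset.mem_insert_of_mem h0
    have hcardi : (insert x c).card = c.card + 1 := Finset.card_insert_of_notMem hx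
    have hf1 : 1 ≤ m - c.card := by omega
    refine ⟨h0', by omega, fun y => if y = x then m - c.card - 1 else g y, ?_, ?_, ?_⟩
    · -- injectivity
      intro r hr s hs hrs
      simp only [Finset.coe_insert, Set.mem_insert_iff, Finset.mem_coe] at hr hs
      simp only at hrs
      by_cases h1 : r = x <;> by_cases h2 : s = x
      · rw [h1, h2]
      · exfalso
        have hsc : s ∈ c := hs.resolve_left h2
        rw [if_pos h1, if_neg h2] at hrs
        have := (hrange s hsc).1
        omega
      · exfalso
        have hrc : r ∈ c := hr.resolve_left h1
        rw [if_neg h1, if_pos h2] at hrs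
        have := (hrange r hrc).1
        omega
      · have hrc : r ∈ c := hr.resolve_left h1
        have hsc : s ∈ c := hs.resolve_left h2
        rw [if_neg h1, if_neg h2] at hrs
        exact hinj (Finset.mem_coe.mpr hrc) (Finset.mem_coe.mpr hsc) hrs
    · -- range
      intro p hp
      rw [hcardi]
      by_cases hpx : p = x
      · simp only [hpx, if_pos rfl, if_true, eq_self_iff_true]
        omega
      · simp only [if_neg hpx]
        have hpc : p ∈ c := (Finset.mem_insert.mp hp).resolve_left hpx
        have := hrange p hpc
        omega
    · -- witness condition
      intro p hp hp0
      rcases Finset.mem_insert.mp hp with rfl | hpc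
      · refine ⟨i, Finset.mem_insert_of_mem hi, by omega, ?_, ?_⟩
        · simp only [if_pos rfl, if_neg (show i ≠ x by omega), if_true, eq_self_iff_true]
          have := (hrange i hi).1
          omega
        · simp only [if_pos rfl, if_true, eq_self_iff_true]
          have : 1 ≤ (2:ℕ) ^ (m - c.card - 1) := Nat.one_le_two_pow
          omega
      · obtain ⟨q, hq, hqp, hlt', hd⟩ := W p hpc hp0
        have hqx : q ≠ x := fun hh => hx (hh ▸ hq)
        have hpx : p ≠ x := fun hh => hx (hh ▸ hpc)
        refine ⟨q, Finset.mem_insert_of_mem hq, hqp, ?_, ?_⟩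
        · simp only [if_neg hqx, if_neg hpx]; exact hlt'
        · simp only [if_neg hpx]; exact hd
  · -- erase the pebble on x = i + 1
    set x := i + 1 with hxdef
    have hc1 : 1 ≤ c.card := Finset.card_pos.mpr ⟨0, h0⟩
    have h0' : (0:ℕ) ∈ c.erase x := Finset.mem_erase.mpr ⟨by omega, h0⟩
    have hcard' : (c.erase x).card ≤ m := by
      rw [Finset.card_erase_of_mem hx]; omega
    set b := g x with hb
    have hbm := hrange x hx
    have hne_b : ∀ r ∈ c.erase x, g r ≠ b := by
      intro r hr hh
      obtain ⟨hrx, hrc⟩ := Finset.mem_erase.mp hr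
      exact hrx (hinj (Finset.mem_coe.mpr hrc) (Finset.mem_coe.mpr hx) hh)
    have hmono : ∀ r ∈ c.erase x, ∀ s ∈ c.erase x, g r < g s →
        (if g r < b then g r + 1 else g r) < (if g s < b then g s + 1 else g s) := by
      intro r hr s hs hgrs
      have h1 := hne_b r hr
      have h2 := hne_b s hs
      split_ifs <;> omega
    refine ⟨h0', hcard', fun y => if g y < b then g y + 1 else g y, ?_, ?_, ?_⟩
    · -- injectivity
      intro r hr s hs hrs
      simp only [Finset.coe_erase, Set.mem_diff, Finset.mem_coe] at hr hs
      have hr' : r ∈ c.erase x := Finset.mem_erase.mpr ⟨by simpa using hr.2, hr.1⟩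
      have hs' : s ∈ c.erase x := Finset.mem_erase.mpr ⟨by simpa using hs.2, hs.1⟩
      have h1 := hne_b r hr'
      have h2 := hne_b s hs'
      simp only at hrs
      have : g r = g s := by split_ifs at hrs <;> omega
      exact hinj (Finset.mem_coe.mpr hr.1) (Finset.mem_coe.mpr hs.1) this
    · -- range
      intro p hp
      obtain ⟨hpx, hpc⟩ := Finset.mem_erase.mp hp
      have h1 := hrange p hpc
      have h2 := hne_b p hp
      rw [Finset.card_erase_of_mem hx]
      show m - (c.card - 1) ≤ (if g p < b then g p + 1 else g p) ∧
        (if g p < b then g p + 1 else g p) < m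
      split_ifs <;> omega
    · -- witness condition
      intro p hp hp0
      obtain ⟨hpx, hpc⟩ := Finset.mem_erase.mp hp
      obtain ⟨q, hq, hqp, hlt', hd⟩ := W p hpc hp0
      rcases eq_or_ne q x with rfl | hqx
      · -- the witness was the erased pebble
        have hgpb : g p < b := hlt'
        have hip : i < p := by omega
        have hie : i ∈ c.erase x := Finset.mem_erase.mpr ⟨by omega, hi⟩
        have hgip : g i ≠ g p := fun hh => by
          have : i = p := hinj (Finset.mem_coe.mpr hi) (Finset.mem_coe.mpr hpc) hh
          omega
        have hgm : ∀ r ∈ c, g r < m := fun r hr => (hrange r hr).2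
        have hgp' : (if g p < b then g p + 1 else g p) = g p + 1 := if_pos hgpb
        have h2 : (2:ℕ) ^ (g p + 1) = 2 ^ g p + 2 ^ g p := by
          rw [pow_succ, mul_two]
        rcases lt_or_gt_of_ne hgip with hgi | hgi
        · -- g i < g p : use the chain lemma from i
          have hg0 : g p < g 0 := peb_lt_g0 hgm W p hpc hp0
          have hi0 : i ≠ 0 := by rintro rfl; omega
          have hT : g p - 1 < g 0 := by omega
          obtain ⟨u, hu, hui, hTu, hdu⟩ :=
            peb_chain hgm W hT i hi hi0 (by omega)
          have hue : u ∈ c.erase x := Finset.mem_erase.mpr ⟨by omega, hu⟩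
          have hgu : g p < g u := by
            have hup : u ≠ p := by omega
            have : g u ≠ g p := fun hh => hup
              (hinj (Finset.mem_coe.mpr hu) (Finset.mem_coe.mpr hpc) hh)
            omega
          refine ⟨u, hue, by omega, hmono p hp u hue hgu, ?_⟩
          simp only [hgp']
          have e1 : (g p - 1) + 1 = g p := by omega
          rw [e1] at hdu
          -- hd : p ≤ (i+1) + 2^{g p}, hdu : i + 2^{g i} ≤ u + 2^{g p}
          have hpow : 1 ≤ (2:ℕ) ^ g i := Nat.one_le_two_pow
          omega
        · -- g p < g i : use i itself
          refine ⟨i, hie, hip, hmono p hp i hie hgi, ?_⟩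
          simp only [hgp']
          have hpow : 1 ≤ (2:ℕ) ^ g p := Nat.one_le_two_pow
          omega
      · -- witness survives
        have hqe : q ∈ c.erase x := Finset.mem_erase.mpr ⟨hqx, hq⟩
        refine ⟨q, hqe, hqp, hmono p hp q hqe hlt', ?_⟩
        have : (2:ℕ) ^ g p ≤ 2 ^ (if g p < b then g p + 1 else g p) :=
          Nat.pow_le_pow_right (by norm_num) (by split_ifs <;> omega)
        exact le_trans hd (Nat.add_le_add_left this q)

/-- With only `n - 1` movable pebbles, node `2 ^ n - 1` can never be pebbled. -/
theorem pebble_lower_bound (n : ℕ) (hn : 1 ≤ n) :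
    ∀ c : Finset ℕ, PebbleReachable (n - 1) c → 2 ^ n - 1 ∉ c := by
  have hsucc : n - 1 + 1 = n := by omega
  have hInv : ∀ c : Finset ℕ, PebbleReachable (n - 1) c → PebInv n c := by
    intro c h
    unfold PebbleReachable at h
    induction h with
    | refl =>
      refine ⟨Finset.mem_singleton_self 0, by simp; omega, fun _ => n - 1, ?_, ?_, ?_⟩
      · intro r hr s hs _
        simp only [Finset.coe_singleton, Set.mem_singleton_iff] at hr hs
        rw [hr, hs]
      · intro p hp
        simp only [Finset.card_singleton]
        omega
      · intro p hp hp0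
        simp only [Finset.mem_singleton] at hp
        exact absurd hp hp0
    | @tail c' c'' _ hstep ih =>
      have := peb_step hstep (by rwa [hsucc])
      rwa [hsucc] at this
  intro c hc hmem
  obtain ⟨_, _, g, _, hrange, W⟩ := hInv c hc
  have hb := peb_bound hn (fun p hp => (hrange p hp).2) W _ hmem
  have h1 : 1 ≤ (2:ℕ) ^ g (2 ^ n - 1) := Nat.one_le_two_pow
  have h2 : (2:ℕ) ^ (n - 1) < 2 ^ n :=
    Nat.pow_lt_pow_right (by norm_num) (by omega)
  have h3 : 1 ≤ (2:ℕ) ^ n := Nat.one_le_two_pow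
  omega
end
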